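/- Suppose R₀ > 1 and let Q* ∈ (0,1) be the non-trivial solution of F(Q*) = 0. Then 0 < Q* < (R₀ - 1)/(γ/(γ + θ_max) + R₀ - 1), where θ_max = max_{x∈[0,A]} θ(x). In particular, this upper bound tends to 0 as R₀ → 1⁺. -/

import Mathlib

open MeasureTheory Real Set Filter

/-- `Λ(x,s) = ∫_s^x θ(t) dt`. -/
noncomputable def Lam (θ : ℝ → ℝ) (x s : ℝ) : ℝ := ∫ t in s..x, θ t

/-- `w(x;Q) = Q e^{-γx} ∫₀^x e^{γs} θ(s) e^{-Q Λ(x,s)} ds`. -/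
noncomputable def w (γ : ℝ) (θ : ℝ → ℝ) (Q x : ℝ) : ℝ :=
  Q * Real.exp (-γ * x) * ∫ s in (0:ℝ)..x, Real.exp (γ * s) * θ s * Real.exp (-Q * Lam θ x s)
/-- The kernel `k(x,s) = (p(x)/N)·θ(s)·e^{-γ(x-s)}`. -/
noncomputable def kker (γ N : ℝ) (p θ : ℝ → ℝ) (x s : ℝ) : ℝ :=
  (p x / N) * θ s * Real.exp (-γ * (x - s))

/-- The triangle `Ω = {(x,s) : 0 ≤ s ≤ x ≤ A}` (first coordinate `x`, second `s`). -/
def Tri (A : ℝ) : Set (ℝ × ℝ) := {q | 0 ≤ q.2 ∧ q.2 ≤ q.1 ∧ q.1 ≤ A}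

/-- Basic reproductive number `R₀ = ∬_Ω k(x,s) d(s,x)`. -/
noncomputable def R0 (γ N A : ℝ) (p θ : ℝ → ℝ) : ℝ :=
  ∫ q in Tri A, kker γ N p θ q.1 q.2

/-- `F(Q) = 1 - ∬_Ω k(x,s) e^{-Q Λ(x,s)} d(s,x)`. -/
noncomputable def FF (γ N A : ℝ) (p θ : ℝ → ℝ) (Q : ℝ) : ℝ :=
  1 - ∫ q in Tri A, kker γ N p θ q.1 q.2 * Real.exp (-Q * Lam θ q.1 q.2)

/-- Iteration map `T(Q) = Q·(1 - F(Q))`. -/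
noncomputable def TT (γ N A : ℝ) (p θ : ℝ → ℝ) (Q : ℝ) : ℝ :=
  Q * (1 - FF γ N A p θ Q)

open Topology

/-! The map `Q ↦ F(Q)` is concave, being `1` minus an integral of the convex functions
`Q ↦ k e^{-QΛ}` with `k ≥ 0`. At the root, `0 = F(Q*) ≥ (1 - Q*) F(0) + Q* F(1)`, where
`F(0) = 1 - R₀`. Moreover `F(1) > γ/(γ + θ_max)`: for fixed `x`, `(γ + θ(s)) e^{-γ(x-s)-Λ(x,s)}`
is the `s`-derivative of `e^{-γ(x-s)-Λ(x,s)}` and `θ(s) ≤ θ_max/(γ + θ_max) · (γ + θ(s))`, so the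
inner integral of `k e^{-Λ}` is at most `θ_max/(γ + θ_max) · (1 - e^{-(γ+θ_max)A}) · p(x)/N`.
Solving the resulting linear inequality for `Q*` gives the bound. -/

theorem ContinuousOn.exists_continuous_eqOn_Icc {α β : Type*} [LinearOrder α] [TopologicalSpace α]
    [OrderTopology α] [TopologicalSpace β] {f : α → β} {a b : α} (hab : a ≤ b)
    (hf : ContinuousOn f (Icc a b)) : ∃ g : α → β, Continuous g ∧ EqOn g f (Icc a b) :=
  ⟨IccExtend hab ((Icc a b).domRestrict f), hf.domRestrict.Icc_extend',
    fun _ hx => IccExtend_of_mem _ _ hx⟩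

theorem isClosed_tri (A : ℝ) : IsClosed (Tri A) :=
  (isClosed_le continuous_const continuous_snd).inter
    ((isClosed_le continuous_snd continuous_fst).inter
      (isClosed_le continuous_fst continuous_const))

theorem isCompact_tri (A : ℝ) : IsCompact (Tri A) :=
  (isCompact_Icc.prod isCompact_Icc).of_isClosed_subset (isClosed_tri A)
    fun _ ⟨h0s, hsx, hxA⟩ => ⟨⟨h0s.trans hsx, hxA⟩, ⟨h0s, hsx.trans hxA⟩⟩

theorem indicator_tri_apply (A : ℝ) (F : ℝ × ℝ → ℝ) (x s : ℝ) :
    (Tri A).indicator F (x, s) =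
      (Icc 0 A).indicator (fun x => (Icc 0 x).indicator (fun s => F (x, s)) s) x := by
  simp only [indicator_apply, Tri, mem_ofPred_eq, mem_Icc]
  split_ifs <;> grind

theorem integral_indicator_tri_apply (A : ℝ) (F : ℝ × ℝ → ℝ) (x : ℝ) :
    ∫ s, (Tri A).indicator F (x, s) =
      (Icc 0 A).indicator (fun x => ∫ s in (0:ℝ)..x, F (x, s)) x := by
  simp only [indicator_tri_apply]
  by_cases hx : x ∈ Icc 0 A
  · simp only [indicator_of_mem hx]
    rw [integral_indicator measurableSet_Icc, integral_Icc_eq_integral_Ioc,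
      intervalIntegral.integral_of_le hx.1]
  · simp [indicator_of_notMem hx]

theorem setIntegral_tri_le {A : ℝ} (hA : 0 ≤ A) {F : ℝ × ℝ → ℝ} (hF : IntegrableOn F (Tri A))
    {B : ℝ → ℝ} (hB : IntervalIntegrable B volume 0 A)
    (hFB : ∀ x ∈ Icc 0 A, ∫ s in (0:ℝ)..x, F (x, s) ≤ B x) :
    ∫ q in Tri A, F q ≤ ∫ x in (0:ℝ)..A, B x := by
  have hFi : Integrable ((Tri A).indicator F) (volume.prod volume) :=
    hF.integrable_indicator (isClosed_tri A).measurableSet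
  rw [← integral_indicator (isClosed_tri A).measurableSet, Measure.volume_eq_prod,
    integral_prod _ hFi, intervalIntegral.integral_of_le hA, ← integral_Icc_eq_integral_Ioc,
    ← integral_indicator measurableSet_Icc]
  have hBi := ((intervalIntegrable_iff_integrableOn_Icc_of_le hA).1 hB).integrable_indicator
    measurableSet_Icc
  refine integral_mono hFi.integral_prod_left hBi fun x => ?_
  rw [integral_indicator_tri_apply]
  by_cases hx : x ∈ Icc 0 A
  · simpa only [indicator_of_mem hx] using hFB x hx
  · simp only [indicator_of_notMem hx, le_refl]

theorem convexOn_integral_mul_exp_mul {α : Type*} [MeasurableSpace α] {μ : Measure α}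
    {k L : α → ℝ} (hk : 0 ≤ᵐ[μ] k) (hi : ∀ t : ℝ, Integrable (fun a => k a * exp (t * L a)) μ) :
    ConvexOn ℝ univ fun t => ∫ a, k a * exp (t * L a) ∂μ := by
  refine ⟨convex_univ, fun t _ u _ a b ha hb hab => ?_⟩
  simp only [smul_eq_mul, ← integral_const_mul,
    ← integral_add ((hi t).const_mul a) ((hi u).const_mul b)]
  refine integral_mono_ae (hi _) (((hi t).const_mul a).add ((hi u).const_mul b)) ?_
  filter_upwards [hk] with x hkx
  have hexp := convexOn_exp.2 (mem_univ (t * L x)) (mem_univ (u * L x)) ha hb hab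
  simp only [smul_eq_mul] at hexp
  calc k x * exp ((a * t + b * u) * L x) = k x * exp (a * (t * L x) + b * (u * L x)) := by
        ring_nf
    _ ≤ k x * (a * exp (t * L x) + b * exp (u * L x)) := mul_le_mul_of_nonneg_left hexp hkx
    _ = a * (k x * exp (t * L x)) + b * (k x * exp (u * L x)) := by ring

theorem Lam_eq_sub {θ : ℝ → ℝ} (hθ : Continuous θ) (x s : ℝ) :
    Lam θ x s = (∫ t in (0:ℝ)..x, θ t) - ∫ t in (0:ℝ)..s, θ t :=
  (intervalIntegral.integral_interval_sub_left (hθ.intervalIntegrable (μ := volume) 0 x)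
    (hθ.intervalIntegrable 0 s)).symm

theorem continuous_Lam {θ : ℝ → ℝ} (hθ : Continuous θ) :
    Continuous fun q : ℝ × ℝ => Lam θ q.1 q.2 := by
  have hG := intervalIntegral.continuous_primitive (μ := volume)
    (fun a b => hθ.intervalIntegrable a b) 0
  simp only [Lam_eq_sub hθ]
  exact (hG.comp continuous_fst).sub (hG.comp continuous_snd)

theorem hasDerivAt_Lam_left {θ : ℝ → ℝ} (hθ : Continuous θ) (x s : ℝ) :
    HasDerivAt (Lam θ x) (-θ s) s :=
  intervalIntegral.integral_hasDerivAt_left (hθ.intervalIntegrable (μ := volume) _ _)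
    (hθ.stronglyMeasurableAtFilter _ _) hθ.continuousAt

theorem Lam_zero_le_mul {θ : ℝ → ℝ} {θmax x : ℝ} (hθ : Continuous θ) (hx : 0 ≤ x)
    (hle : ∀ t ∈ Icc 0 x, θ t ≤ θmax) : Lam θ x 0 ≤ θmax * x := by
  simpa [Lam, mul_comm] using intervalIntegral.integral_mono_on hx
    (hθ.intervalIntegrable (μ := volume) 0 x) intervalIntegrable_const hle

theorem continuous_kker {γ N : ℝ} {p θ : ℝ → ℝ} (hp : Continuous p) (hθ : Continuous θ) :
    Continuous fun q : ℝ × ℝ => kker γ N p θ q.1 q.2 := by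
  unfold kker; fun_prop

theorem integral_add_mul_exp_neg_eq {θ : ℝ → ℝ} (hθ : Continuous θ) (γ x : ℝ) :
    ∫ s in (0:ℝ)..x, (γ + θ s) * exp (-(γ * (x - s) + Lam θ x s)) =
      1 - exp (-(γ * x + Lam θ x 0)) := by
  have hderiv : ∀ s, HasDerivAt (fun s => exp (-(γ * (x - s) + Lam θ x s)))
      ((γ + θ s) * exp (-(γ * (x - s) + Lam θ x s))) s := fun s =>
    ((((hasDerivAt_id s).const_sub x).const_mul γ).add (hasDerivAt_Lam_left hθ x s)).neg.exp
      |>.congr_deriv (by simp only [Pi.neg_apply, Pi.add_apply, id]; ring)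
  have hcont : Continuous fun s => exp (-(γ * (x - s) + Lam θ x s)) :=
    continuous_iff_continuousAt.2 fun s => (hderiv s).continuousAt
  rw [intervalIntegral.integral_eq_sub_of_hasDerivAt (fun s _ => hderiv s)
    (((continuous_const.add hθ).mul hcont).intervalIntegrable _ _)]
  simp [Lam]

theorem integral_mul_exp_neg_Lam_le {θ : ℝ → ℝ} {γ θmax x : ℝ} (hθ : Continuous θ) (hγ : 0 ≤ γ)
    (hθmax : 0 < θmax) (hx : 0 ≤ x) (hle : ∀ t ∈ Icc 0 x, θ t ≤ θmax) :
    ∫ s in (0:ℝ)..x, θ s * exp (-γ * (x - s)) * exp (-Lam θ x s) ≤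
      θmax / (γ + θmax) * (1 - exp (-((γ + θmax) * x))) := by
  set m := θmax / (γ + θmax)
  have hc : 0 < γ + θmax := by linarith
  have hL : Continuous (Lam θ x) :=
    continuous_iff_continuousAt.2 fun s => (hasDerivAt_Lam_left hθ x s).continuousAt
  have hpt : ∀ s ∈ Icc 0 x, θ s * exp (-γ * (x - s)) * exp (-Lam θ x s) ≤
      m * ((γ + θ s) * exp (-(γ * (x - s) + Lam θ x s))) := fun s hs => by
    have hθs : θ s ≤ m * (γ + θ s) := by
      rw [div_mul_eq_mul_div, le_div_iff₀ hc]
      nlinarith [hle s hs]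
    rw [mul_assoc, ← exp_add, ← mul_assoc, neg_add, neg_mul]
    exact mul_le_mul_of_nonneg_right hθs (exp_pos _).le
  calc _ ≤ ∫ s in (0:ℝ)..x, m * ((γ + θ s) * exp (-(γ * (x - s) + Lam θ x s))) :=
        intervalIntegral.integral_mono_on hx ((by fun_prop : Continuous _).intervalIntegrable _ _)
          ((by fun_prop : Continuous _).intervalIntegrable _ _) hpt
    _ = m * (1 - exp (-(γ * x + Lam θ x 0))) := by
        rw [intervalIntegral.integral_const_mul, integral_add_mul_exp_neg_eq hθ]
    _ ≤ m * (1 - exp (-((γ + θmax) * x))) := by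
        gcongr
        linarith [Lam_zero_le_mul hθ hx hle]

section FF

variable {γ N A : ℝ} {p θ : ℝ → ℝ}

theorem R0_eq_one_sub_FF_zero : R0 γ N A p θ = 1 - FF γ N A p θ 0 := by
  simp [R0, FF]

theorem FF_congr {p' θ' : ℝ → ℝ} (hp : EqOn p p' (Icc 0 A)) (hθ : EqOn θ θ' (Icc 0 A)) :
    FF γ N A p θ = FF γ N A p' θ' := by
  funext Q
  refine congrArg (1 - ·) (setIntegral_congr_fun (isClosed_tri A).measurableSet ?_)
  rintro ⟨x, s⟩ ⟨h0s, hsx, hxA⟩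
  have hLam : Lam θ x s = Lam θ' x s := intervalIntegral.integral_congr fun t ht => by
    rw [uIcc_of_le hsx] at ht
    exact hθ ⟨h0s.trans ht.1, ht.2.trans hxA⟩
  simp only [kker, hLam, hp ⟨h0s.trans hsx, hxA⟩, hθ ⟨h0s, hsx.trans hxA⟩]

theorem concaveOn_FF (hN : 0 ≤ N) (hp : Continuous p) (hθ : Continuous θ)
    (hp0 : ∀ x ∈ Icc 0 A, 0 ≤ p x) (hθ0 : ∀ x ∈ Icc 0 A, 0 ≤ θ x) :
    ConcaveOn ℝ univ (FF γ N A p θ) := by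
  have hk : ∀ q ∈ Tri A, 0 ≤ kker γ N p θ q.1 q.2 := fun q ⟨h0s, hsx, hxA⟩ =>
    mul_nonneg (mul_nonneg (div_nonneg (hp0 _ ⟨h0s.trans hsx, hxA⟩) hN)
      (hθ0 _ ⟨h0s, hsx.trans hxA⟩)) (exp_pos _).le
  have hconv := convexOn_integral_mul_exp_mul (μ := volume.restrict (Tri A))
    (k := fun q => kker γ N p θ q.1 q.2) (L := fun q => -Lam θ q.1 q.2)
    (ae_restrict_of_forall_mem (isClosed_tri A).measurableSet hk) fun t =>
      ((continuous_kker hp hθ).mul ((continuous_Lam hθ).neg.const_mul t).rexp).continuousOn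
        |>.integrableOn_compact (isCompact_tri A)
  have hFF : FF γ N A p θ =
      fun Q => 1 - ∫ q in Tri A, kker γ N p θ q.1 q.2 * exp (Q * -Lam θ q.1 q.2) := by
    funext Q
    simp only [FF, mul_neg, neg_mul]
  rw [hFF]
  exact (concaveOn_const 1 convex_univ).sub hconv

theorem div_add_lt_FF_one {θmax : ℝ} (hγ : 0 < γ) (hA : 0 ≤ A) (hN : 0 < N) (hp : Continuous p)
    (hθ : Continuous θ) (hp0 : ∀ x ∈ Icc 0 A, 0 ≤ p x) (hpN : ∫ x in (0:ℝ)..A, p x = N)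
    (hθmax0 : 0 < θmax) (hθmax : ∀ x ∈ Icc 0 A, θ x ≤ θmax) :
    γ / (γ + θmax) < FF γ N A p θ 1 := by
  set m := θmax / (γ + θmax)
  set δ := exp (-((γ + θmax) * A))
  have hc : 0 < γ + θmax := by linarith
  have hinner : ∀ x ∈ Icc 0 A,
      ∫ s in (0:ℝ)..x, kker γ N p θ x s * exp (-1 * Lam θ x s) ≤ m * (1 - δ) / N * p x := by
    intro x hx
    have hpx : 0 ≤ p x / N := div_nonneg (hp0 x hx) hN.le
    calc _ = p x / N * ∫ s in (0:ℝ)..x, θ s * exp (-γ * (x - s)) * exp (-Lam θ x s) := by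
          rw [← intervalIntegral.integral_const_mul]
          simp only [kker, neg_one_mul, mul_assoc]
      _ ≤ p x / N * (m * (1 - exp (-((γ + θmax) * x)))) := by
          gcongr
          exact integral_mul_exp_neg_Lam_le hθ hγ.le hθmax0 hx.1
            fun t ht => hθmax t ⟨ht.1, ht.2.trans hx.2⟩
      _ ≤ p x / N * (m * (1 - δ)) := by
          gcongr
          exact exp_le_exp.2 (neg_le_neg (mul_le_mul_of_nonneg_left hx.2 hc.le))
      _ = m * (1 - δ) / N * p x := by ring
  have hC := setIntegral_tri_le (F := fun q => kker γ N p θ q.1 q.2 * exp (-1 * Lam θ q.1 q.2))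
    (B := fun x => m * (1 - δ) / N * p x) hA
    (((continuous_kker hp hθ).mul ((continuous_Lam hθ).const_mul (-1)).rexp).continuousOn
      |>.integrableOn_compact (isCompact_tri A))
    ((continuous_const.mul hp).intervalIntegrable 0 A) hinner
  rw [intervalIntegral.integral_const_mul, hpN, div_mul_cancel₀ _ hN.ne'] at hC
  have hm : γ / (γ + θmax) = 1 - m := by
    rw [eq_sub_iff_add_eq, ← add_div, div_self hc.ne']
  have hmδ : 0 < m * δ := by positivity
  rw [FF]
  linarith

end FF

theorem tendsto_sub_one_div_add_sub_one {c : ℝ} (hc : c ≠ 0) :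
    Tendsto (fun r : ℝ => (r - 1) / (c + r - 1)) (𝓝[>] 1) (𝓝 0) := by
  have : ContinuousAt (fun r : ℝ => (r - 1) / (c + r - 1)) 1 :=
    (continuousAt_id.sub continuousAt_const).div (by fun_prop) (by simpa using hc)
  simpa using this.tendsto.mono_left nhdsWithin_le_nhds

/-- bound on the endemic equilibrium `Q*` and its behavior as `R₀ → 1⁺`. -/
theorem endemic_equilibrium_bound (γ A N : ℝ) (hγ : 0 < γ) (hA : 0 < A) (hN : 0 < N)
    (θ p : ℝ → ℝ)
    (hθc : ContinuousOn θ (Set.Icc 0 A)) (hθpos : ∀ x ∈ Set.Icc 0 A, 0 < θ x)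
    (hpc : ContinuousOn p (Set.Icc 0 A)) (hppos : ∀ x ∈ Set.Icc 0 A, 0 < p x)
    (hnorm : (1/N) * ∫ x in (0:ℝ)..A, p x = 1)
    (θmax : ℝ) (hθmax : IsGreatest (θ '' Set.Icc 0 A) θmax)
    (hR0 : 1 < R0 γ N A p θ)
    (Qstar : ℝ) (hQmem : Qstar ∈ Set.Ioo (0:ℝ) 1) (hQroot : FF γ N A p θ Qstar = 0) :
    (0 < Qstar ∧
      Qstar < (R0 γ N A p θ - 1) / (γ / (γ + θmax) + R0 γ N A p θ - 1)) ∧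
    Filter.Tendsto (fun r : ℝ => (r - 1) / (γ / (γ + θmax) + r - 1))
      (nhdsWithin 1 (Set.Ioi 1)) (nhds 0) := by
  obtain ⟨hQ0, hQ1⟩ := hQmem
  obtain ⟨θ', hθ', hθθ'⟩ := hθc.exists_continuous_eqOn_Icc hA.le
  obtain ⟨p', hp', hpp'⟩ := hpc.exists_continuous_eqOn_Icc hA.le
  have hθmax0 : 0 < θmax := by
    obtain ⟨x, hx, rfl⟩ := hθmax.1
    exact hθpos x hx
  have hp'0 : ∀ x ∈ Icc 0 A, 0 ≤ p' x := fun x hx => hpp' hx ▸ (hppos x hx).le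
  have hp'N : ∫ x in (0:ℝ)..A, p' x = N := by
    rw [intervalIntegral.integral_congr (by rwa [uIcc_of_le hA.le])]
    field_simp at hnorm
    exact hnorm
  have hconc := (concaveOn_FF (γ := γ) hN.le hp' hθ' hp'0
    fun x hx => hθθ' hx ▸ (hθpos x hx).le).2
      (mem_univ 0) (mem_univ 1) (sub_nonneg.2 hQ1.le) hQ0.le (sub_add_cancel 1 Qstar)
  have hFF1 := div_add_lt_FF_one hγ hA.le hN hp' hθ' hp'0 hp'N hθmax0
    fun x hx => hθθ' hx ▸ hθmax.2 (mem_image_of_mem θ hx)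
  rw [FF_congr hpp'.symm hθθ'.symm] at hQroot
  simp only [smul_eq_mul, mul_zero, mul_one, zero_add, hQroot] at hconc
  have hg : 0 < γ / (γ + θmax) := div_pos hγ (by linarith)
  refine ⟨⟨hQ0, ?_⟩, tendsto_sub_one_div_add_sub_one hg.ne'⟩
  rw [R0_eq_one_sub_FF_zero, FF_congr hpp'.symm hθθ'.symm] at hR0 ⊢
  rw [lt_div_iff₀ (by linarith)]
  nlinarith [mul_lt_mul_of_pos_left hFF1 hQ0]
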